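/- Let G be a group containing a normal, non-abelian maximal subgroup M with Z(G) properly contained in Z(M). Suppose that G contains maximal subgroups K and L such that K ∩ M = Z(M), Z(M) is not contained in L, and L is not normal in G. Then every element of K \ Z(M) lies in some G-conjugate of L. -/

import Mathlib

open Subgroup

namespace NC

variable {G : Type*} [Group G]

/-- The centre of a subgroup `H`, realised as a subgroup of the ambient group `G`. -/
def centerOf (H : Subgroup G) : Subgroup G := H ⊓ Subgroup.centralizer (H : Set G)

/-- `H` is a maximal subgroup of `K` (both subgroups of the ambient group `G`). -/
def IsMaximalIn (H K : Subgroup G) : Prop :=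
  H < K ∧ ∀ T : Subgroup G, H < T → T ≤ K → T = K

/-- The non-commuting, non-generating graph of `G`: vertices `x, y` are adjacent
iff they do not commute and do not generate `G`.  (Central elements are isolated
vertices here; the paper simply removes them from the vertex set.) -/
def ncGraph (G : Type*) [Group G] : SimpleGraph G where
  Adj x y := x * y ≠ y * x ∧ Subgroup.closure {x, y} ≠ ⊤
  symm := by
    constructor
    intro x y h
    exact ⟨fun e => h.1 e.symm, by rw [Set.pair_comm]; exact h.2⟩
  loopless := by
    constructor
    intro x h
    exact h.1 rfl

/-- The conjugate `g H g⁻¹` of a subgroup `H` by an element `g`. -/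
def conjSub (g : G) (H : Subgroup G) : Subgroup G := H.map (MulAut.conj g).toMonoidHom

/-- "The quotient of `G` by the subgroup `H` is cyclic": every coset of `H` is a
power of a fixed coset.  For `H` normal this says exactly that `G/H` is cyclic. -/
def QuotCyclic (H : Subgroup G) : Prop := ∃ g : G, ∀ x : G, ∃ n : ℤ, x⁻¹ * g ^ n ∈ H

/-- `P` is a Sylow `p`-subgroup of `G`. -/
def IsSylowIn (p : ℕ) (P : Subgroup G) : Prop :=
  IsPGroup p P ∧ ∀ R : Subgroup G, IsPGroup p R → P ≤ R → R = P

/-- The Frattini subgroup of a subgroup `P` (the intersection of the maximal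
subgroups of `P`), realised as a subgroup of the ambient group. -/
def phiIn (P : Subgroup G) : Subgroup G := P ⊓ sInf {W : Subgroup G | IsMaximalIn W P}

/-- `G` has exactly two conjugacy classes of maximal subgroups. -/
def TwoMaxClasses (G : Type*) [Group G] : Prop :=
  ∃ K L : Subgroup G, IsCoatom K ∧ IsCoatom L ∧ (∀ g : G, conjSub g K ≠ L) ∧
    ∀ T : Subgroup G, IsCoatom T → (∃ g : G, T = conjSub g K) ∨ (∃ g : G, T = conjSub g L)

/-- The induced subgraph of the non-commuting, non-generating graph on the
actual vertex set `G \ Z(G)`. -/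
def ncSubgraph (G : Type*) [Group G] := (ncGraph G).induce {x : G | x ∉ Subgroup.center G}

/-!
Write `Z = Z(M)`. It is an abelian normal subgroup of `G` centralized by `M`, and `G = M ⟨k⟩`
since `k ∉ M`; so `G` acts on `Z` through powers of `k`, and `[Z, G]` lies in the image `R` of
the homomorphism `z ↦ ⁅k, z⁆` on `Z`, which is normal in `G`. If `R ≤ L`, then `[Z, L] ≤ L`, so
`Z` normalizes `L`; but the normalizer of the non-normal maximal subgroup `L` is `L` itself,
contradicting `Z ⊄ L`. Otherwise `R L = G`, and writing `k = ⁅k, z⁆ l` gives `l = z k z⁻¹`,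
i.e. `k ∈ z⁻¹ L z`.
-/

open scoped commutatorElement

theorem commutator_closure_le_iff {A R : Subgroup G} [R.Normal] {s : Set G} :
    ⁅A, closure s⁆ ≤ R ↔ ∀ a ∈ A, ∀ g ∈ s, ⁅a, g⁆ ∈ R := by
  set π := QuotientGroup.mk' R
  set T := (centralizer (A.map π : Set (G ⧸ R))).comap π
  have mem_T (g : G) : g ∈ T ↔ ∀ a ∈ A, ⁅a, g⁆ ∈ R := by
    have hπ (a : G) : ((⁅a, g⁆ : G) : G ⧸ R) = ⁅(a : G ⧸ R), (g : G ⧸ R)⁆ :=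
      map_commutatorElement π a g
    simp [T, π, mem_centralizer_iff, ← commutatorElement_eq_one_iff_mul_comm, ← hπ]
  refine ⟨fun h a ha g hg => h (commutator_mem_commutator ha (subset_closure hg)), fun h => ?_⟩
  have hs : closure s ≤ T :=
    closure_le _ |>.2 fun g hg => (mem_T g).2 fun a ha => h a ha g hg
  exact commutator_le.2 fun a ha g hg => (mem_T g).1 (hs hg) a ha

theorem normalizer_eq_self_of_isCoatom {L : Subgroup G} (hL : IsCoatom L) (hLn : ¬ L.Normal) :
    normalizer (L : Set G) = L :=
  (hL.le_iff.1 le_normalizer).resolve_left (mt normalizer_eq_top_iff.1 hLn)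

instance centerOf_normal (M : Subgroup G) [M.Normal] : (centerOf M).Normal := by
  unfold centerOf; infer_instance

instance centerOf_isMulCommutative (M : Subgroup G) : IsMulCommutative (centerOf M) :=
  ⟨⟨fun a b => Subtype.ext (mem_centralizer_iff.1 a.2.2 b b.2.1).symm⟩⟩

theorem le_centralizer_centerOf (M : Subgroup G) : M ≤ centralizer (centerOf M) :=
  le_centralizer_iff.2 inf_le_right

theorem commutatorElement_mem_of_normal {A : Subgroup G} [A.Normal] (k : G) {a : G} (ha : a ∈ A) :
    ⁅k, a⁆ ∈ A :=
  mul_mem (‹A.Normal›.conj_mem a ha k) (inv_mem ha)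

def commutatorHom (k : G) (A : Subgroup G) [A.Normal] [IsMulCommutative A] : A →* G where
  toFun a := ⁅k, (a : G)⁆
  map_one' := commutatorElement_one_right k
  map_mul' a b := by
    have hb : ⁅k, (b : G)⁆ ∈ A := commutatorElement_mem_of_normal k b.2
    calc ⁅k, ((a * b : A) : G)⁆ = k * a * k⁻¹ * (⁅k, (b : G)⁆ * (a : G)⁻¹) := by
          simp only [coe_mul, commutatorElement_def]; group
      _ = ⁅k, (a : G)⁆ * ⁅k, (b : G)⁆ := by
          rw [setLike_mul_comm hb (inv_mem a.2), commutatorElement_def]; group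

theorem commutatorHom_apply (k : G) (A : Subgroup G) [A.Normal] [IsMulCommutative A] (a : A) :
    commutatorHom k A a = ⁅k, (a : G)⁆ := rfl

section

variable {M A : Subgroup G} [A.Normal] [IsMulCommutative A] {k : G}

theorem commutatorHom_range_normal (hMA : M ≤ centralizer A) (hMk : M ⊔ zpowers k = ⊤) :
    (commutatorHom k A).range.Normal := by
  rw [← normalizer_eq_top_iff, eq_top_iff, ← hMk, sup_le_iff, le_normalizer_iff,
    le_normalizer_iff]
  constructor
  · rintro m hm _ ⟨a, rfl⟩
    have hcomm := mem_centralizer_iff.1 (hMA hm) _ (commutatorElement_mem_of_normal k a.2)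
    rw [commutatorHom_apply, ← hcomm, mul_inv_cancel_right]
    exact ⟨a, rfl⟩
  · rintro _ ⟨n, rfl⟩ _ ⟨a, rfl⟩
    refine ⟨⟨k ^ n * a * (k ^ n)⁻¹, ‹A.Normal›.conj_mem _ a.2 _⟩, ?_⟩
    simp only [commutatorHom_apply, conjugate_commutatorElement]
    rw [← (Commute.self_zpow k n).eq, mul_inv_cancel_right]

theorem commutator_top_le_commutatorHom_range (hMA : M ≤ centralizer A)
    (hMk : M ⊔ zpowers k = ⊤) : ⁅A, ⊤⁆ ≤ (commutatorHom k A).range := by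
  have := commutatorHom_range_normal hMA hMk
  have hgen : M ⊔ zpowers k = closure (M ∪ {k}) := by
    rw [Subgroup.closure_union, closure_eq, zpowers_eq_closure]
  rw [← hMk, hgen, commutator_closure_le_iff]
  rintro a ha g (hg | rfl)
  · rw [commutatorElement_eq_one_iff_mul_comm.2 (mem_centralizer_iff.1 (hMA hg) a ha)]
    exact one_mem _
  · rw [← commutatorElement_inv]
    exact inv_mem ⟨⟨a, ha⟩, rfl⟩

end

theorem statement_16_general {M : Subgroup G} (hM : IsCoatom M) (hMn : M.Normal)
    {K L : Subgroup G} (hL : IsCoatom L)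
    (hKM : K ⊓ M = centerOf M) (hZL : ¬ centerOf M ≤ L) (hLn : ¬ L.Normal) :
    ∀ k ∈ K, k ∉ centerOf M → ∃ g : G, k ∈ conjSub g L := by
  intro k hkK hkZ
  have hkM : k ∉ M := fun hkM => hkZ (hKM ▸ ⟨hkK, hkM⟩)
  have hMk : M ⊔ zpowers k = ⊤ := hM.2 _ (left_lt_sup.2 (mt zpowers_le.1 hkM))
  have hMZ := le_centralizer_centerOf M
  set R := (commutatorHom k (centerOf M)).range
  have : R.Normal := commutatorHom_range_normal hMZ hMk
  have hZR : ⁅centerOf M, ⊤⁆ ≤ R := commutator_top_le_commutatorHom_range hMZ hMk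
  by_cases hRL : R ≤ L
  · have hZN : centerOf M ≤ normalizer (L : Set G) :=
      le_normalizer_iff_commutator_le_right.2
        ((commutator_mono le_rfl le_top).trans (hZR.trans hRL))
    exact absurd (normalizer_eq_self_of_isCoatom hL hLn ▸ hZN) hZL
  · have hRL_top : R ⊔ L = ⊤ := hL.2 _ (right_lt_sup.2 hRL)
    obtain ⟨_, ⟨z, rfl⟩, l, hl, hk⟩ := mem_sup_of_normal_left.1 (hRL_top ▸ mem_top k)
    refine ⟨z⁻¹, l, hl, ?_⟩
    have hl' : l = ⁅k, (z : G)⁆⁻¹ * k := eq_inv_mul_of_mul_eq hk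
    simp only [MulEquiv.toMonoidHom_eq_coe, MonoidHom.coe_coe, MulAut.conj_apply, hl',
      commutatorElement_def]
    group

/-- Lemma 4.8(iii) / `lem:primgpint`. -/
theorem statement_16 {M : Subgroup G} (hM : IsCoatom M) (hMn : M.Normal)
    (hMna : ∃ a ∈ M, ∃ b ∈ M, a * b ≠ b * a)
    (hZ : Subgroup.center G < centerOf M)
    {K L : Subgroup G} (hK : IsCoatom K) (hL : IsCoatom L)
    (hKM : K ⊓ M = centerOf M) (hZL : ¬ centerOf M ≤ L) (hLn : ¬ L.Normal) :
    ∀ k ∈ K, k ∉ centerOf M → ∃ g : G, k ∈ conjSub g L :=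
  statement_16_general hM hMn hL hKM hZL hLn

end NC
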